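/- arXiv:2412.20502 — 4 statements merged into one kernel-verified Lean document; each statement's English description precedes it below -/
import Mathlib

section
/- Let A and S be 2×2 real symmetric matrices with tr(A S) = 0, and suppose λ I ≤ A ≤ Λ I in the Loewner order for constants 0 < λ ≤ Λ. Then −(2/Λ) det(A) det(S) ≤ tr(A S²) ≤ −(2/λ) det(A) det(S). (This is the matrix form of the estimate −(2/Λ_γ) K_γ ≤ ⟨A_γ S, S⟩ ≤ −(2/λ_γ) K_γ for a γ-anisotropic minimal surface, where K_γ = det(A_γ S) is the anisotropic Gaussian curvature.) -/
/-!
By Cayley–Hamilton, `S² = tr(S) S - det(S) I`, so `tr(A S) = 0` gives `tr(A S²) = -tr(A) det(S)`.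
For `A > 0` the matrix `A S` is similar to the symmetric `A^{1/2} S A^{1/2}`, hence has real
eigenvalues, so `4 det(A) det(S) ≤ tr(A S)² = 0` and `det S ≤ 0`. It remains to see
`λ tr A ≤ 2 det A ≤ Λ tr A`, i.e. `λ (μ₁ + μ₂) ≤ 2 μ₁ μ₂ ≤ Λ (μ₁ + μ₂)` for the eigenvalues
`μᵢ ∈ [λ, Λ]` of `A`; without eigenvalues these are `tr(adj(A) (A - λ I)) ≥ 0` and
`tr(adj(A) (Λ I - A)) ≥ 0`, traces of products of positive semidefinite matrices.
-/

open Matrix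
open scoped ComplexOrder

namespace Matrix

-- `tr(A B)` is the sum of all entries of the Schur product `A ⊙ Bᵀ`.
theorem PosSemidef.trace_mul_nonneg {𝕜 ι : Type*} [RCLike 𝕜] [Fintype ι] {A B : Matrix ι ι 𝕜}
    (hA : A.PosSemidef) (hB : B.PosSemidef) : 0 ≤ (A * B).trace := by
  have h := (hA.hadamard hB.transpose).dotProduct_mulVec_nonneg 1
  rw [← transpose_transpose B, ← sum_hadamard_eq]
  simpa [dotProduct, mulVec] using h

section Adjugate

variable {n : Type*} [Fintype n] [DecidableEq n]

theorem PosDef.adjugate {A : Matrix n n ℝ} (hA : A.PosDef) : A.adjugate.PosDef := by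
  have h := hA.inv.smul hA.det_pos
  rwa [inv_def, smul_smul, Ring.mul_inverse_cancel _ hA.det_pos.ne'.isUnit, one_smul] at h

theorem trace_adjugate_mul_sub_smul_one (A : Matrix n n ℝ) (c : ℝ) :
    (A.adjugate * (A - c • 1)).trace = Fintype.card n * A.det - c * A.adjugate.trace := by
  rw [Matrix.mul_sub, adjugate_mul, trace_sub, Matrix.mul_smul, Matrix.mul_one, trace_smul,
    trace_smul, trace_one, smul_eq_mul, smul_eq_mul, mul_comm]

variable {A : Matrix n n ℝ} {c : ℝ}

theorem PosDef.mul_trace_adjugate_le_card_mul_det (hA : A.PosDef)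
    (h : (A - c • 1).PosSemidef) : c * A.adjugate.trace ≤ Fintype.card n * A.det := by
  have := hA.adjugate.posSemidef.trace_mul_nonneg h
  rw [trace_adjugate_mul_sub_smul_one] at this
  linarith

theorem PosDef.card_mul_det_le_mul_trace_adjugate (hA : A.PosDef)
    (h : (c • 1 - A).PosSemidef) : Fintype.card n * A.det ≤ c * A.adjugate.trace := by
  have := hA.adjugate.posSemidef.trace_mul_nonneg h
  rw [← neg_sub, Matrix.mul_neg, trace_neg, trace_adjugate_mul_sub_smul_one] at this
  linarith

end Adjugate

section FinTwo

theorem trace_adjugate_fin_two {R : Type*} [CommRing R] (A : Matrix (Fin 2) (Fin 2) R) :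
    A.adjugate.trace = A.trace := by
  simp [adjugate_fin_two, trace_fin_two, add_comm]

-- Cayley–Hamilton: `S * S = S.trace • S - S.det • 1`.
theorem trace_mul_mul_self_fin_two {R : Type*} [CommRing R] (A S : Matrix (Fin 2) (Fin 2) R) :
    (A * (S * S)).trace = S.trace * (A * S).trace - S.det * A.trace := by
  simp only [trace_fin_two, det_fin_two, mul_apply, Fin.sum_univ_two]
  ring

/- The difference is the discriminant of the characteristic polynomial of `A * S`, which has real
eigenvalues; `key` writes it as a sum of squares after the Cholesky substitution `A = L Lᵀ`. -/
theorem PosSemidef.four_mul_det_mul_det_le_sq_trace_mul {A S : Matrix (Fin 2) (Fin 2) ℝ}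
    (hA : A.PosSemidef) (hS : S.IsSymm) : 4 * (A.det * S.det) ≤ (A * S).trace ^ 2 := by
  have hA10 : A 1 0 = A 0 1 := by simpa using (hA.isHermitian.apply 1 0).symm
  have hS10 : S 1 0 = S 0 1 := (hS.apply 1 0).symm
  have hdet := hA.det_nonneg
  have ha := hA.diag_nonneg (i := 0)
  rw [← sub_nonneg]
  simp only [det_fin_two, trace_fin_two, mul_apply, Fin.sum_univ_two, hA10, hS10] at hdet ⊢
  set a := A 0 0
  set b := A 0 1
  set c := A 1 1
  set p := S 0 0
  set q := S 0 1
  set r := S 1 1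
  have key : a ^ 2 * ((a * p + b * q + (b * q + c * r)) ^ 2
        - 4 * ((a * c - b * b) * (p * r - q * q)))
      = (a ^ 2 * p + 2 * a * b * q + (2 * b ^ 2 - a * c) * r) ^ 2
        + 4 * (a * c - b * b) * (a * q + b * r) ^ 2 := by ring
  rcases ha.eq_or_lt with ha0 | ha0
  · have hb : b = 0 := by rw [← ha0] at hdet; nlinarith
    rw [← ha0, hb]
    nlinarith [sq_nonneg (c * r)]
  · refine (mul_nonneg_iff_of_pos_left (pow_pos ha0 2)).mp ?_
    rw [key]
    positivity

end FinTwo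

end Matrix

theorem trace_mul_sq_bounds_of_loewner_general
    (A S : Matrix (Fin 2) (Fin 2) ℝ) (hS : S.IsSymm)
    (htr : (A * S).trace = 0)
    (lam Lam : ℝ) (hlam : 0 < lam)
    (hlow : (A - lam • (1 : Matrix (Fin 2) (Fin 2) ℝ)).PosSemidef)
    (hupp : ((Lam • (1 : Matrix (Fin 2) (Fin 2) ℝ)) - A).PosSemidef) :
    -(2 / Lam) * (A.det * S.det) ≤ (A * (S * S)).trace ∧
      (A * (S * S)).trace ≤ -(2 / lam) * (A.det * S.det) := by
  have hA : A.PosDef := by simpa using PosDef.posSemidef_add hlow (PosDef.one.smul hlam)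
  have hdetA := hA.det_pos
  have htrA := hA.trace_pos
  have hdetS : 0 ≤ -S.det := by
    have := hA.posSemidef.four_mul_det_mul_det_le_sq_trace_mul hS
    rw [htr] at this
    nlinarith
  have hT : (A * (S * S)).trace = A.trace * -S.det := by
    rw [trace_mul_mul_self_fin_two, htr]; ring
  have hlow' : lam * A.trace ≤ 2 * A.det := by
    simpa [trace_adjugate_fin_two] using hA.mul_trace_adjugate_le_card_mul_det hlow
  have hupp' : 2 * A.det ≤ Lam * A.trace := by
    simpa [trace_adjugate_fin_two] using hA.card_mul_det_le_mul_trace_adjugate hupp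
  have hLam : 0 < Lam := pos_of_mul_pos_left (by linarith) htrA.le
  rw [hT]
  constructor
  · calc -(2 / Lam) * (A.det * S.det) = 2 * A.det / Lam * -S.det := by ring
      _ ≤ A.trace * -S.det := by gcongr; exact (div_le_iff₀' hLam).2 hupp'
  · calc A.trace * -S.det ≤ 2 * A.det / lam * -S.det := by
          gcongr; exact (le_div_iff₀' hlam).2 hlow'
      _ = -(2 / lam) * (A.det * S.det) := by ring

/-- If `A` and `S` are 2×2 real symmetric matrices with `tr(A S) = 0` and
`λ I ≤ A ≤ Λ I` in the Loewner order for some `0 < λ ≤ Λ`, then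
`−(2/Λ) det(A) det(S) ≤ tr(A S²) ≤ −(2/λ) det(A) det(S)`. -/
theorem trace_mul_sq_bounds_of_loewner
    (A S : Matrix (Fin 2) (Fin 2) ℝ) (hA : A.IsSymm) (hS : S.IsSymm)
    (htr : (A * S).trace = 0)
    (lam Lam : ℝ) (hlam : 0 < lam) (hlamLam : lam ≤ Lam)
    (hlow : (A - lam • (1 : Matrix (Fin 2) (Fin 2) ℝ)).PosSemidef)
    (hupp : ((Lam • (1 : Matrix (Fin 2) (Fin 2) ℝ)) - A).PosSemidef) :
    -(2 / Lam) * (A.det * S.det) ≤ (A * (S * S)).trace ∧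
      (A * (S * S)).trace ≤ -(2 / lam) * (A.det * S.det) :=
  trace_mul_sq_bounds_of_loewner_general A S hS htr lam Lam hlam hlow hupp
end

section
/- Let B and H be 2×2 real symmetric matrices with tr(B H) = 0, and suppose λ I ≤ B ≤ Λ I in the Loewner order for constants 0 < λ ≤ Λ. Then −2 det H ≤ tr(H²) ≤ (λ/Λ + Λ/λ)(−det H). (Geometrically, with B = A_γ and H the shape operator of a γ-anisotropic minimal surface, this is the identity |A|² = (a₁/a₂ + a₂/a₁)(−K^Σ) together with the bounds a₁/a₂ ∈ [λ/Λ, Λ/λ].) -/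
/-!
With `τ = tr H`, the identity `tr (H²) = τ² - 2 det H` gives the lower bound at once and turns
the upper bound into `λΛ τ² ≤ (Λ - λ)² (-det H)`. Write `discr M = (tr M)² - 4 det M` for the
squared gap between the eigenvalues of `M`. Since `tr (B H) = 0`, Cauchy–Schwarz for the
trace-free parts of `B` and `H` gives `(tr B · τ)² ≤ discr B · discr H`. The eigenvalues
`tr B / 2 ± √(discr B) / 2` of `B` lie in `[λ, Λ]`, so `√(discr B) / 2` is at most both
`tr B / 2 - λ` and `Λ - tr B / 2`; adding `Λ` times the first bound to `λ` times the second gives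
`√(discr B) (Λ + λ) ≤ tr B (Λ - λ)`, hence `τ² (Λ + λ)² ≤ (Λ - λ)² discr H`, which is the
upper bound.
-/

section OrderedRing

variable {R : Type*} [CommRing R] [LinearOrder R] [IsStrictOrderedRing R]

lemma le_mul_of_le_sq_of_le_sq {d x y : R} (hx : 0 ≤ x) (hy : 0 ≤ y) (hdx : d ≤ x ^ 2)
    (hdy : d ≤ y ^ 2) : d ≤ x * y := by
  rcases le_total x y with hxy | hyx
  · exact hdx.trans_eq (sq x) |>.trans (mul_le_mul_of_nonneg_left hxy hx)
  · exact hdy.trans_eq (sq y) |>.trans (mul_le_mul_of_nonneg_right hyx hy)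

lemma mul_add_sq_le_of_le_sq {d x y s t : R} (hs : 0 ≤ s) (ht : 0 ≤ t) (hx : 0 ≤ x)
    (hy : 0 ≤ y) (hdx : d ≤ x ^ 2) (hdy : d ≤ y ^ 2) :
    d * (s + t) ^ 2 ≤ (s * x + t * y) ^ 2 := by
  have hxy := le_mul_of_le_sq_of_le_sq hx hy hdx hdy
  nlinarith [mul_le_mul_of_nonneg_left hdx (sq_nonneg s),
    mul_le_mul_of_nonneg_left hdy (sq_nonneg t), mul_le_mul_of_nonneg_left hxy (mul_nonneg hs ht)]

end OrderedRing

namespace Matrix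

section CommRing

variable {R : Type*} [CommRing R]

lemma trace_mul_self_fin_two (M : Matrix (Fin 2) (Fin 2) R) :
    (M * M).trace = M.trace ^ 2 - 2 * M.det := by
  simp only [trace_fin_two, det_fin_two, mul_apply, Fin.sum_univ_two]
  ring

lemma trace_sub_smul_one_fin_two (M : Matrix (Fin 2) (Fin 2) R) (c : R) :
    (M - c • 1).trace = M.trace - 2 * c := by
  simp only [trace_sub, trace_smul, trace_one, Fintype.card_fin, Nat.cast_ofNat, smul_eq_mul,
    mul_comm]

lemma trace_smul_one_sub_fin_two (M : Matrix (Fin 2) (Fin 2) R) (c : R) :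
    (c • 1 - M).trace = 2 * c - M.trace := by
  simp only [trace_sub, trace_smul, trace_one, Fintype.card_fin, Nat.cast_ofNat, smul_eq_mul,
    mul_comm]

lemma discr_fin_two_of_isSymm {M : Matrix (Fin 2) (Fin 2) R} (hM : M.IsSymm) :
    M.discr = (M 0 0 - M 1 1) ^ 2 + 4 * M 0 1 ^ 2 := by
  rw [discr_fin_two, trace_fin_two, det_fin_two, hM.apply 0 1]
  ring

lemma discr_sub_smul_one_fin_two (M : Matrix (Fin 2) (Fin 2) R) (c : R) :
    (M - c • 1).discr = M.discr := by
  simp only [discr_fin_two, trace_fin_two, det_fin_two, sub_apply, smul_apply, smul_eq_mul,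
    one_apply_eq, one_apply_ne zero_ne_one, one_apply_ne one_ne_zero]
  ring

lemma discr_smul_one_sub_fin_two (M : Matrix (Fin 2) (Fin 2) R) (c : R) :
    (c • 1 - M).discr = M.discr := by
  simp only [discr_fin_two, trace_fin_two, det_fin_two, sub_apply, smul_apply, smul_eq_mul,
    one_apply_eq, one_apply_ne zero_ne_one, one_apply_ne one_ne_zero]
  ring

end CommRing

section Ordered

variable {R : Type*} [CommRing R] [LinearOrder R] [IsStrictOrderedRing R]

lemma discr_nonneg_of_isSymm {M : Matrix (Fin 2) (Fin 2) R} (hM : M.IsSymm) : 0 ≤ M.discr := by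
  rw [discr_fin_two_of_isSymm hM]
  positivity

/-- Cauchy–Schwarz for the trace-free parts of `A` and `B`. -/
lemma sq_two_mul_trace_mul_sub_le_discr_mul_discr {A B : Matrix (Fin 2) (Fin 2) R}
    (hA : A.IsSymm) (hB : B.IsSymm) :
    (2 * (A * B).trace - A.trace * B.trace) ^ 2 ≤ A.discr * B.discr := by
  have hgap : A.discr * B.discr - (2 * (A * B).trace - A.trace * B.trace) ^ 2
      = 4 * ((A 0 0 - A 1 1) * B 0 1 - A 0 1 * (B 0 0 - B 1 1)) ^ 2 := by
    rw [discr_fin_two_of_isSymm hA, discr_fin_two_of_isSymm hB, trace_fin_two, trace_fin_two,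
      trace_fin_two, mul_apply, mul_apply, Fin.sum_univ_two, Fin.sum_univ_two, hA.apply 0 1,
      hB.apply 0 1]
    ring
  exact sub_nonneg.mp (hgap ▸ by positivity)

end Ordered

lemma PosSemidef.discr_le_trace_sq {N : Matrix (Fin 2) (Fin 2) ℝ} (hN : N.PosSemidef) :
    N.discr ≤ N.trace ^ 2 := by
  rw [discr_fin_two]
  linarith [hN.det_nonneg]

lemma discr_mul_sq_le_of_posSemidef_sub {B : Matrix (Fin 2) (Fin 2) ℝ} {l L : ℝ} (hl : 0 ≤ l)
    (hlL : l ≤ L) (hlow : (B - l • 1).PosSemidef) (hupp : (L • 1 - B).PosSemidef) :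
    B.discr * (L + l) ^ 2 ≤ (B.trace * (L - l)) ^ 2 := by
  have hdx := hlow.discr_le_trace_sq
  have hdy := hupp.discr_le_trace_sq
  rw [discr_sub_smul_one_fin_two] at hdx
  rw [discr_smul_one_sub_fin_two] at hdy
  have h := mul_add_sq_le_of_le_sq (hl.trans hlL) hl hlow.trace_nonneg hupp.trace_nonneg hdx hdy
  have htr : L * (B - l • 1).trace + l * (L • 1 - B).trace = B.trace * (L - l) := by
    rw [trace_sub_smul_one_fin_two, trace_smul_one_sub_fin_two]
    ring
  rwa [htr] at h

end Matrix

open Matrix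

lemma trace_sq_mul_le_neg_det_of_trace_mul_eq_zero {B H : Matrix (Fin 2) (Fin 2) ℝ}
    (hB : B.IsSymm) (hH : H.IsSymm) (htr : (B * H).trace = 0) {l L : ℝ} (hl : 0 < l)
    (hlL : l ≤ L) (hlow : (B - l • 1).PosSemidef) (hupp : (L • 1 - B).PosSemidef) :
    l * L * H.trace ^ 2 ≤ (L - l) ^ 2 * -H.det := by
  have hspread := discr_mul_sq_le_of_posSemidef_sub hl.le hlL hlow hupp
  have hcs : (B.trace * H.trace) ^ 2 ≤ B.discr * H.discr := by
    simpa [htr] using sq_two_mul_trace_mul_sub_le_discr_mul_discr hB hH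
  have htrB : 0 < B.trace := by
    have := hlow.trace_nonneg
    rw [trace_sub_smul_one_fin_two] at this
    linarith
  have hdiscrH := discr_nonneg_of_isSymm hH
  have hscaled : B.trace ^ 2 * (H.trace * (L + l)) ^ 2 ≤ B.trace ^ 2 * ((L - l) ^ 2 * H.discr) :=
    calc B.trace ^ 2 * (H.trace * (L + l)) ^ 2 = (B.trace * H.trace) ^ 2 * (L + l) ^ 2 := by ring
      _ ≤ B.discr * H.discr * (L + l) ^ 2 := by gcongr
      _ = B.discr * (L + l) ^ 2 * H.discr := by ring
      _ ≤ (B.trace * (L - l)) ^ 2 * H.discr := by gcongr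
      _ = B.trace ^ 2 * ((L - l) ^ 2 * H.discr) := by ring
  have h := le_of_mul_le_mul_left hscaled (by positivity)
  rw [discr_fin_two] at h
  linear_combination h / 4

/-- If `B` and `H` are 2×2 real symmetric matrices with `tr(B H) = 0` and
`λ I ≤ B ≤ Λ I` in the Loewner order for some `0 < λ ≤ Λ`, then
`−2 det H ≤ tr(H²) ≤ (λ/Λ + Λ/λ)(−det H)`. -/
theorem normSq_bounds_of_anisotropic_minimal
    (B H : Matrix (Fin 2) (Fin 2) ℝ) (hB : B.IsSymm) (hH : H.IsSymm)
    (htr : (B * H).trace = 0)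
    (lam Lam : ℝ) (hlam : 0 < lam) (hlamLam : lam ≤ Lam)
    (hlow : (B - lam • (1 : Matrix (Fin 2) (Fin 2) ℝ)).PosSemidef)
    (hupp : ((Lam • (1 : Matrix (Fin 2) (Fin 2) ℝ)) - B).PosSemidef) :
    -2 * H.det ≤ (H * H).trace ∧
      (H * H).trace ≤ (lam / Lam + Lam / lam) * (-H.det) := by
  have hLam : 0 < Lam := hlam.trans_le hlamLam
  have key := trace_sq_mul_le_neg_det_of_trace_mul_eq_zero hB hH htr hlam hlamLam hlow hupp
  rw [trace_mul_self_fin_two]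
  refine ⟨by linarith [sq_nonneg H.trace], ?_⟩
  rw [div_add_div _ _ hLam.ne' hlam.ne', div_mul_eq_mul_div, le_div_iff₀ (by positivity)]
  linear_combination key
end

section
/- Let γ̄ : ℝ³ → ℝ be smooth on ℝ³ \ {0}, positively 1-homogeneous, positive on ℝ³ \ {0}, and a convex integrand, i.e. D²γ̄(w)[v, v] > 0 for every w ≠ 0 and every v ∈ ℝ³ not proportional to w. Let Ω ⊆ ℝ² be open and let u : Ω → ℝ be smooth and satisfy the anisotropic minimal surface equation Σ_{i,j=1}^{2} ∂_i∂_jγ̄(−∂₁u(x), −∂₂u(x), 1) · ∂_i∂_ju(x) = 0 for all x ∈ Ω. Then det(Hess u(x)) ≤ 0 for every x ∈ Ω; that is, the graph of u has nonpositive Gaussian curvature. -/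
/-!
At `w = (-∇u, 1)` the convexity of `γ` makes the restriction of `D²γ(w)` to the horizontal
plane a positive definite (not necessarily symmetric) form `A`, since no nonzero horizontal
vector is proportional to `w`. The equation says `∑ A_ij H_ij = 0` for the symmetric Hessian
`H = [[p, q], [q, r]]` of `u`. In dimension two this forces `det H ≤ 0`: if `pr > q²`, then
AM-GM and the discriminant bound `(A₀₁ + A₁₀)² < 4 A₀₀ A₁₁` give
`(A₀₀ p + A₁₁ r)² = (A₀₁ + A₁₀)² q² < 4 A₀₀ A₁₁ pr ≤ (A₀₀ p + A₁₁ r)²`.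
-/

open Matrix

theorem not_exists_eq_smul_of_apply_eq_zero {ι : Type*} {v w : ι → ℝ} {k : ι}
    (hv : v ≠ 0) (hvk : v k = 0) (hwk : w k ≠ 0) : ¬ ∃ t : ℝ, v = t • w := by
  rintro ⟨t, rfl⟩
  obtain rfl : t = 0 := by simpa [hwk] using hvk
  exact hv (zero_smul ℝ w)

theorem Matrix.det_nonpos_of_sum_mul_eq_zero {A H : Matrix (Fin 2) (Fin 2) ℝ}
    (hA : ∀ v ≠ 0, 0 < v ⬝ᵥ A *ᵥ v) (hH : H.IsSymm) (h : ∑ i, ∑ j, A i j * H i j = 0) :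
    H.det ≤ 0 := by
  have hQ (s t : ℝ) (hst : s ≠ 0 ∨ t ≠ 0) :
      0 < A 0 0 * s ^ 2 + (A 0 1 + A 1 0) * s * t + A 1 1 * t ^ 2 := by
    have hne : ![s, t] ≠ 0 := by
      rintro h0
      have := congrFun h0 0
      have := congrFun h0 1
      simp_all
    convert hA _ hne using 1
    simp only [dotProduct, mulVec, Fin.sum_univ_two, cons_val_zero, cons_val_one, cons_val_fin_one]
    ring
  have ha : 0 < A 0 0 := by simpa using hQ 1 0 (by simp)
  have hd : 0 < A 1 1 := by simpa using hQ 0 1 (by simp)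
  have hdisc : (A 0 1 + A 1 0) ^ 2 < 4 * A 0 0 * A 1 1 := by
    have := hQ (2 * A 1 1) (-(A 0 1 + A 1 0)) (Or.inl (by positivity))
    nlinarith
  have hH10 : H 1 0 = H 0 1 := hH.apply 0 1
  simp only [Fin.sum_univ_two, hH10] at h
  rw [Matrix.det_fin_two, hH10]
  by_contra! hdet
  have had : 0 < 4 * A 0 0 * A 1 1 := by positivity
  have hcontra :
      (A 0 0 * H 0 0 + A 1 1 * H 1 1) ^ 2 < (A 0 0 * H 0 0 + A 1 1 * H 1 1) ^ 2 := by
    calc _ = (A 0 1 + A 1 0) ^ 2 * H 0 1 ^ 2 := by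
          linear_combination (A 0 0 * H 0 0 + A 1 1 * H 1 1 - (A 0 1 + A 1 0) * H 0 1) * h
      _ ≤ 4 * A 0 0 * A 1 1 * H 0 1 ^ 2 := by gcongr
      _ < 4 * A 0 0 * A 1 1 * (H 0 0 * H 1 1) := by gcongr; linarith
      _ ≤ _ := by nlinarith [sq_nonneg (A 0 0 * H 0 0 - A 1 1 * H 1 1)]
  exact lt_irrefl _ hcontra

theorem ContDiffAt.isSymm_hessian {ι : Type*} [Fintype ι] [DecidableEq ι] {f : (ι → ℝ) → ℝ}
    {x : ι → ℝ} (hf : ContDiffAt ℝ 2 f x) :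
    (Matrix.of fun i j => fderiv ℝ (fderiv ℝ f) x (Pi.single i 1) (Pi.single j 1)).IsSymm := by
  have hsymm := hf.isSymmSndFDerivAt (by simp [minSmoothness_of_isRCLikeNormedField])
  ext i j
  exact hsymm _ _

theorem dotProduct_mulVec_horizontal (B : (Fin 3 → ℝ) →L[ℝ] (Fin 3 → ℝ) →L[ℝ] ℝ)
    (v : Fin 2 → ℝ) :
    v ⬝ᵥ (Matrix.of fun i j : Fin 2 => B (Pi.single i.castSucc 1) (Pi.single j.castSucc 1)) *ᵥ v
      = B ![v 0, v 1, 0] ![v 0, v 1, 0] := by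
  have hv : (![v 0, v 1, 0] : Fin 3 → ℝ) = v 0 • Pi.single 0 1 + v 1 • Pi.single 1 1 := by
    ext k; fin_cases k <;> simp
  rw [hv]
  simp only [dotProduct, mulVec, of_apply, Fin.sum_univ_two, Fin.castSucc_zero, Fin.castSucc_one,
    map_add, map_smul, _root_.add_apply, _root_.smul_apply, smul_eq_mul]
  ring

theorem anisotropic_minimal_graph_det_hessian_nonpos_general
    (γ : (Fin 3 → ℝ) → ℝ)
    (hconv : ∀ w : Fin 3 → ℝ, w ≠ 0 → ∀ v : Fin 3 → ℝ, (¬ ∃ t : ℝ, v = t • w) →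
      0 < fderiv ℝ (fderiv ℝ γ) w v v)
    (Ω : Set (Fin 2 → ℝ)) (hΩ : IsOpen Ω)
    (u : (Fin 2 → ℝ) → ℝ) (hu : ContDiffOn ℝ (⊤ : ℕ∞) u Ω)
    (heq : ∀ x ∈ Ω,
      ∑ i : Fin 2, ∑ j : Fin 2,
        fderiv ℝ (fderiv ℝ γ)
            ![-(fderiv ℝ u x (Pi.single 0 1)), -(fderiv ℝ u x (Pi.single 1 1)), 1]
            (Pi.single i.castSucc 1) (Pi.single j.castSucc 1)
          * fderiv ℝ (fderiv ℝ u) x (Pi.single i 1) (Pi.single j 1) = 0) :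
    ∀ x ∈ Ω,
      (Matrix.of fun i j : Fin 2 =>
        fderiv ℝ (fderiv ℝ u) x (Pi.single i 1) (Pi.single j 1)).det ≤ 0 := by
  intro x hx
  set w : Fin 3 → ℝ :=
    ![-(fderiv ℝ u x (Pi.single 0 1)), -(fderiv ℝ u x (Pi.single 1 1)), 1]
  have hw2 : w 2 ≠ 0 := by simp [w]
  have hw : w ≠ 0 := fun h => hw2 (by simp [h])
  refine Matrix.det_nonpos_of_sum_mul_eq_zero
    (A := Matrix.of fun i j : Fin 2 =>
      fderiv ℝ (fderiv ℝ γ) w (Pi.single i.castSucc 1) (Pi.single j.castSucc 1))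
    (fun v hv => ?_)
    ((hu.contDiffAt (hΩ.mem_nhds hx)).of_le (WithTop.coe_le_coe.mpr le_top)).isSymm_hessian
    (heq x hx)
  rw [dotProduct_mulVec_horizontal]
  refine hconv w hw _ (not_exists_eq_smul_of_apply_eq_zero ?_ (k := 2) (by simp) hw2)
  contrapose! hv
  ext i
  fin_cases i
  · simpa using congrFun hv 0
  · simpa using congrFun hv 1

/-- If `u` solves the anisotropic minimal surface equation
`Σ_{i,j} ∂_i∂_jγ(−∇u, 1) ∂_i∂_ju = 0` on an open set `Ω ⊆ ℝ²`, with `γ` a smooth, positive,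
positively 1-homogeneous convex integrand on `ℝ³ \ {0}`, then `det(Hess u) ≤ 0` on `Ω`;
i.e. the graph of `u` has nonpositive Gaussian curvature. -/
theorem anisotropic_minimal_graph_det_hessian_nonpos
    (γ : (Fin 3 → ℝ) → ℝ)
    (hsmooth : ContDiffOn ℝ (⊤ : ℕ∞) γ {(0 : Fin 3 → ℝ)}ᶜ)
    (hhom : ∀ t : ℝ, 0 < t → ∀ x : Fin 3 → ℝ, γ (t • x) = t * γ x)
    (hpos : ∀ w : Fin 3 → ℝ, w ≠ 0 → 0 < γ w)
    (hconv : ∀ w : Fin 3 → ℝ, w ≠ 0 → ∀ v : Fin 3 → ℝ, (¬ ∃ t : ℝ, v = t • w) →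
      0 < fderiv ℝ (fderiv ℝ γ) w v v)
    (Ω : Set (Fin 2 → ℝ)) (hΩ : IsOpen Ω)
    (u : (Fin 2 → ℝ) → ℝ) (hu : ContDiffOn ℝ (⊤ : ℕ∞) u Ω)
    (heq : ∀ x ∈ Ω,
      ∑ i : Fin 2, ∑ j : Fin 2,
        fderiv ℝ (fderiv ℝ γ)
            ![-(fderiv ℝ u x (Pi.single 0 1)), -(fderiv ℝ u x (Pi.single 1 1)), 1]
            (Pi.single i.castSucc 1) (Pi.single j.castSucc 1)
          * fderiv ℝ (fderiv ℝ u) x (Pi.single i 1) (Pi.single j 1) = 0) :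
    ∀ x ∈ Ω,
      (Matrix.of fun i j : Fin 2 =>
        fderiv ℝ (fderiv ℝ u) x (Pi.single i 1) (Pi.single j 1)).det ≤ 0 :=
  anisotropic_minimal_graph_det_hessian_nonpos_general γ hconv Ω hΩ u hu heq
end

section
/- Let γ̄ : ℝ³ → ℝ be smooth on ℝ³ \ {0}, positively 1-homogeneous, positive on ℝ³ \ {0}, and a convex integrand, i.e. D²γ̄(w)[v, v] > 0 for every w ≠ 0 and every v ∈ ℝ³ not proportional to w. Let Ω ⊆ ℝ² be open and let u : Ω → ℝ be smooth and satisfy Σ_{i,j=1}^{2} ∂_i∂_jγ̄(−∂₁u(x), −∂₂u(x), 1) · ∂_i∂_ju(x) = 0 on Ω. Then for every x ∈ Ω, det(Hess u(x)) = 0 implies Hess u(x) = 0. In other words, at a critical point of the Gauss map of the graph of u the full second fundamental form vanishes. -/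
/-!
At a point `x`, write `H` for the Hessian of `u` and `A` for the tangential `2 × 2` block of
`D²γ(−∇u(x), 1)`. Since `(−∇u(x), 1)` has nonzero last coordinate, no nonzero tangential vector
is proportional to it, so convexity of `γ` makes the quadratic form of `A` positive definite.
If `det H = ac − b² = 0` and `Σ A_ij H_ij = 0`, then `a · Σ A_ij H_ij − A₂₂ · det H` is the value
of that quadratic form at `(a, b)`, and similarly at `(b, c)`; hence `a = b = c = 0`.
-/

open Matrix

noncomputable def hessianMatrix {n : ℕ} (u : (Fin n → ℝ) → ℝ) (x : Fin n → ℝ) :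
    Matrix (Fin n) (Fin n) ℝ :=
  Matrix.of fun i j => fderiv ℝ (fderiv ℝ u) x (Pi.single i 1) (Pi.single j 1)

theorem hessianMatrix_isSymm {n : ℕ} {u : (Fin n → ℝ) → ℝ} {x : Fin n → ℝ}
    (hu : ContDiffAt ℝ 2 u x) : (hessianMatrix u x).IsSymm := by
  have hsymm := hu.isSymmSndFDerivAt (by simp [minSmoothness_of_isRCLikeNormedField])
  exact Matrix.IsSymm.ext fun i j => hsymm _ _

/-- The restriction of a bilinear form on `ℝⁿ⁺¹` to the coordinate hyperplane `ℝⁿ × {0}`. -/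
noncomputable def tangentialBlock {n : ℕ}
    (B : (Fin (n + 1) → ℝ) →L[ℝ] (Fin (n + 1) → ℝ) →L[ℝ] ℝ) : Matrix (Fin n) (Fin n) ℝ :=
  Matrix.of fun i j => B (Pi.single i.castSucc 1) (Pi.single j.castSucc 1)

theorem dotProduct_mulVec_tangentialBlock_pos {n : ℕ}
    (B : (Fin (n + 1) → ℝ) →L[ℝ] (Fin (n + 1) → ℝ) →L[ℝ] ℝ) (w : Fin (n + 1) → ℝ)
    (hw : w (Fin.last n) ≠ 0) (hB : ∀ V, (¬ ∃ t : ℝ, V = t • w) → 0 < B V V)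
    (v : Fin n → ℝ) (hv : v ≠ 0) : 0 < v ⬝ᵥ tangentialBlock B *ᵥ v := by
  set V : Fin (n + 1) → ℝ := ∑ i, v i • Pi.single i.castSucc 1 with hV
  have hV_castSucc (k : Fin n) : V k.castSucc = v k := by
    simp [hV, Pi.single_apply]
  have hV_last : V (Fin.last n) = 0 := by
    simp [hV, Fin.castSucc_ne_last]
  have hV_off_ray : ¬ ∃ t : ℝ, V = t • w := by
    rintro ⟨t, ht⟩
    have ht0 : t = 0 := by
      simpa [hV_last, hw] using (congrFun ht (Fin.last n)).symm
    apply hv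
    funext k
    simpa [hV_castSucc, ht0] using congrFun ht k.castSucc
  have hBV : B V V = v ⬝ᵥ tangentialBlock B *ᵥ v := by
    simp only [hV, map_sum, map_smul, _root_.sum_apply, _root_.smul_apply,
      smul_eq_mul, tangentialBlock, dotProduct, mulVec, of_apply, Finset.mul_sum]
    rw [Finset.sum_comm]
    exact Finset.sum_congr rfl fun _ _ => Finset.sum_congr rfl fun _ _ => by ring
  exact hBV ▸ hB V hV_off_ray

theorem Matrix.eq_zero_of_det_eq_zero_of_sum_mul_eq_zero (A H : Matrix (Fin 2) (Fin 2) ℝ)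
    (hA : ∀ v, v ≠ 0 → 0 < v ⬝ᵥ A *ᵥ v) (hH : H.IsSymm) (hdet : H.det = 0)
    (hAH : ∑ i, ∑ j, A i j * H i j = 0) : H = 0 := by
  have h10 : H 1 0 = H 0 1 := hH.apply 0 1
  rw [det_fin_two, h10] at hdet
  simp only [Fin.sum_univ_two, h10] at hAH
  have hform_eq_zero (p q : ℝ)
      (h : A 0 0 * p * p + (A 0 1 + A 1 0) * p * q + A 1 1 * q * q = 0) : ![p, q] = 0 := by
    by_contra hne
    refine (hA _ hne).ne' ?_
    simp only [dotProduct, mulVec, Fin.sum_univ_two, cons_val_zero, cons_val_one]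
    linear_combination h
  have h00 : H 0 0 = 0 :=
    congrFun (hform_eq_zero (H 0 0) (H 0 1) (by linear_combination H 0 0 * hAH - A 1 1 * hdet)) 0
  have h11 : H 1 1 = 0 :=
    congrFun (hform_eq_zero (H 0 1) (H 1 1) (by linear_combination H 1 1 * hAH - A 0 0 * hdet)) 1
  have h01 : H 0 1 = 0 := by
    simpa [h00, h10] using hdet
  ext i j
  fin_cases i <;> fin_cases j <;> simp [h00, h01, h10, h11]

theorem anisotropic_minimal_graph_hessian_vanishes_at_critical_general
    (γ : (Fin 3 → ℝ) → ℝ)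
    (hconv : ∀ w : Fin 3 → ℝ, w ≠ 0 → ∀ v : Fin 3 → ℝ, (¬ ∃ t : ℝ, v = t • w) →
      0 < fderiv ℝ (fderiv ℝ γ) w v v)
    (Ω : Set (Fin 2 → ℝ)) (hΩ : IsOpen Ω)
    (u : (Fin 2 → ℝ) → ℝ) (hu : ContDiffOn ℝ (⊤ : ℕ∞) u Ω)
    (heq : ∀ x ∈ Ω,
      ∑ i : Fin 2, ∑ j : Fin 2,
        fderiv ℝ (fderiv ℝ γ)
            ![-(fderiv ℝ u x (Pi.single 0 1)), -(fderiv ℝ u x (Pi.single 1 1)), 1]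
            (Pi.single i.castSucc 1) (Pi.single j.castSucc 1)
          * fderiv ℝ (fderiv ℝ u) x (Pi.single i 1) (Pi.single j 1) = 0) :
    ∀ x ∈ Ω,
      (Matrix.of fun i j : Fin 2 =>
        fderiv ℝ (fderiv ℝ u) x (Pi.single i 1) (Pi.single j 1)).det = 0 →
      (Matrix.of fun i j : Fin 2 =>
        fderiv ℝ (fderiv ℝ u) x (Pi.single i 1) (Pi.single j 1)) = 0 := by
  intro x hx hdet
  set w : Fin 3 → ℝ := ![-(fderiv ℝ u x (Pi.single 0 1)), -(fderiv ℝ u x (Pi.single 1 1)), 1]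
  have hw_last : w (Fin.last 2) = 1 := rfl
  have hw : w ≠ 0 := fun h => by simp [h] at hw_last
  have hu2 : ContDiffAt ℝ 2 u x :=
    (hu.contDiffAt (hΩ.mem_nhds hx)).of_le (by norm_cast)
  exact Matrix.eq_zero_of_det_eq_zero_of_sum_mul_eq_zero
    (tangentialBlock (fderiv ℝ (fderiv ℝ γ) w)) (hessianMatrix u x)
    (dotProduct_mulVec_tangentialBlock_pos _ w (by rw [hw_last]; exact one_ne_zero) (hconv w hw))
    (hessianMatrix_isSymm hu2) hdet (heq x hx)

/-- If `u` solves the anisotropic minimal surface equation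
`Σ_{i,j} ∂_i∂_jγ(−∇u, 1) ∂_i∂_ju = 0` on an open set `Ω ⊆ ℝ²`, with `γ` a smooth, positive,
positively 1-homogeneous convex integrand on `ℝ³ \ {0}`, then `det(Hess u(x)) = 0` implies
`Hess u(x) = 0` for `x ∈ Ω`: at a critical point of the Gauss map of the graph of `u` the
full second fundamental form vanishes. -/
theorem anisotropic_minimal_graph_hessian_vanishes_at_critical
    (γ : (Fin 3 → ℝ) → ℝ)
    (hsmooth : ContDiffOn ℝ (⊤ : ℕ∞) γ {(0 : Fin 3 → ℝ)}ᶜ)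
    (hhom : ∀ t : ℝ, 0 < t → ∀ x : Fin 3 → ℝ, γ (t • x) = t * γ x)
    (hpos : ∀ w : Fin 3 → ℝ, w ≠ 0 → 0 < γ w)
    (hconv : ∀ w : Fin 3 → ℝ, w ≠ 0 → ∀ v : Fin 3 → ℝ, (¬ ∃ t : ℝ, v = t • w) →
      0 < fderiv ℝ (fderiv ℝ γ) w v v)
    (Ω : Set (Fin 2 → ℝ)) (hΩ : IsOpen Ω)
    (u : (Fin 2 → ℝ) → ℝ) (hu : ContDiffOn ℝ (⊤ : ℕ∞) u Ω)
    (heq : ∀ x ∈ Ω,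
      ∑ i : Fin 2, ∑ j : Fin 2,
        fderiv ℝ (fderiv ℝ γ)
            ![-(fderiv ℝ u x (Pi.single 0 1)), -(fderiv ℝ u x (Pi.single 1 1)), 1]
            (Pi.single i.castSucc 1) (Pi.single j.castSucc 1)
          * fderiv ℝ (fderiv ℝ u) x (Pi.single i 1) (Pi.single j 1) = 0) :
    ∀ x ∈ Ω,
      (Matrix.of fun i j : Fin 2 =>
        fderiv ℝ (fderiv ℝ u) x (Pi.single i 1) (Pi.single j 1)).det = 0 →
      (Matrix.of fun i j : Fin 2 =>
        fderiv ℝ (fderiv ℝ u) x (Pi.single i 1) (Pi.single j 1)) = 0 :=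
  anisotropic_minimal_graph_hessian_vanishes_at_critical_general γ hconv Ω hΩ u hu heq
end
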